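/- Let C ≥ 0 and let f : [0,∞) → ℝ be measurable with 0 ≤ f(x) ≤ C for all x, and set g(x) = e^{−x} f(x). Then for every L ≥ 0 one has ∑_{k=1}^∞ (T^k g)(L) ≤ 2 e C L, where e is Euler's number. -/

import Mathlib

open MeasureTheory Real

/-- The kernel operator `(Tg)(x) = ∫₀ˣ (e^{−y} + e^{−(x−y)}) g(y) dy`. -/
noncomputable def T (g : ℝ → ℝ) : ℝ → ℝ :=
  fun x => ∫ y in (0:ℝ)..x, (Real.exp (-y) + Real.exp (-(x - y))) * g y

/-!
The partial sums `S n = ∑ k < n, T^[k+1] g` satisfy `S (n + 1) = T (g + S n)`. Since `T` is linear,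
positive and `g ≤ C e^{-x}`, they stay below `C Φ` for any `Φ ≥ 0` with `T (e^{-·} + Φ) ≤ Φ` on
`[0, ∞)`. The choice `Φ x = 4x - 2x e^{-x}` works: a direct integration gives
`T (e^{-·} + Φ) x = Φ x - x e^{-x} (1 + x - e^{-x})`. Finally `Φ x ≤ 4x ≤ 2e x`.
-/

section KernelOperator

variable {w : ℝ → ℝ}

lemma intervalIntegrable_kernel_mul (hw : ∀ a b, IntervalIntegrable w volume a b) (x a b : ℝ) :
    IntervalIntegrable (fun y => (exp (-y) + exp (-(x - y))) * w y) volume a b :=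
  (hw a b).continuousOn_mul (by fun_prop)

lemma T_eq (hw : ∀ a b, IntervalIntegrable w volume a b) (x : ℝ) :
    T w x = (∫ y in (0:ℝ)..x, exp (-y) * w y) + exp (-x) * ∫ y in (0:ℝ)..x, exp y * w y := by
  rw [← intervalIntegral.integral_const_mul, ← intervalIntegral.integral_add
    ((hw 0 x).continuousOn_mul (by fun_prop)) (((hw 0 x).continuousOn_mul (by fun_prop)).const_mul _)]
  refine intervalIntegral.integral_congr fun y _ => ?_
  rw [show -(x - y) = -x + y by ring, exp_add]
  ring

lemma continuous_T (hw : ∀ a b, IntervalIntegrable w volume a b) : Continuous (T w) := by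
  have hprim (φ : ℝ → ℝ) (hφ : Continuous φ) :
      Continuous fun x => ∫ y in (0:ℝ)..x, φ y * w y :=
    intervalIntegral.continuous_primitive
      (fun a b => (hw a b).continuousOn_mul hφ.continuousOn) 0
  simp only [funext (T_eq hw)]
  exact (hprim _ (by fun_prop)).add ((by fun_prop : Continuous fun x => exp (-x)).mul
    (hprim _ continuous_exp))

lemma intervalIntegrable_iterate_T (hw : ∀ a b, IntervalIntegrable w volume a b) :
    ∀ k : ℕ, ∀ a b, IntervalIntegrable (T^[k] w) volume a b
  | 0 => hw
  | k + 1 => by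
    rw [Function.iterate_succ']
    exact fun a b => (continuous_T (intervalIntegrable_iterate_T hw k)).intervalIntegrable a b

lemma T_nonneg {x : ℝ} (hx : 0 ≤ x) (h : ∀ y ∈ Set.Icc 0 x, 0 ≤ w y) : 0 ≤ T w x :=
  intervalIntegral.integral_nonneg hx fun y hy => mul_nonneg (by positivity) (h y hy)

lemma iterate_T_nonneg (h : ∀ y, 0 ≤ y → 0 ≤ w y) :
    ∀ k : ℕ, ∀ x, 0 ≤ x → 0 ≤ T^[k] w x
  | 0 => h
  | k + 1 => fun x hx => by
    rw [Function.iterate_succ_apply']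
    exact T_nonneg hx fun y hy => iterate_T_nonneg h k y hy.1

lemma T_mono {v : ℝ → ℝ} {x : ℝ} (hx : 0 ≤ x) (hv : ∀ a b, IntervalIntegrable v volume a b)
    (hw : ∀ a b, IntervalIntegrable w volume a b) (h : ∀ y ∈ Set.Icc 0 x, v y ≤ w y) :
    T v x ≤ T w x :=
  intervalIntegral.integral_mono_on hx (intervalIntegrable_kernel_mul hv x 0 x)
    (intervalIntegrable_kernel_mul hw x 0 x) fun y hy =>
      mul_le_mul_of_nonneg_left (h y hy) (by positivity)

lemma T_const_mul (c x : ℝ) : T (fun y => c * w y) x = c * T w x := by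
  unfold T
  rw [← intervalIntegral.integral_const_mul]
  exact intervalIntegral.integral_congr fun y _ => by ring

lemma T_sum {ι : Type*} (s : Finset ι) {v : ι → ℝ → ℝ}
    (hv : ∀ i ∈ s, ∀ a b, IntervalIntegrable (v i) volume a b) (x : ℝ) :
    T (fun y => ∑ i ∈ s, v i y) x = ∑ i ∈ s, T (v i) x := by
  unfold T
  rw [← intervalIntegral.integral_finsetSum
    fun i hi => intervalIntegrable_kernel_mul (hv i hi) x 0 x]
  simp only [Finset.mul_sum]

end KernelOperator

noncomputable def supersolution (x : ℝ) : ℝ := 4 * x - 2 * x * exp (-x)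

lemma supersolution_nonneg {x : ℝ} (hx : 0 ≤ x) : 0 ≤ supersolution x := by
  have : exp (-x) ≤ 1 := exp_le_one_iff.2 (by linarith)
  unfold supersolution
  nlinarith

lemma supersolution_le {x : ℝ} (hx : 0 ≤ x) : supersolution x ≤ 4 * x := by
  unfold supersolution
  nlinarith [exp_pos (-x)]

lemma T_exp_neg_add_supersolution (x : ℝ) :
    T (fun y => exp (-y) + supersolution y) x
      = supersolution x - x * exp (-x) * (1 + x - exp (-x)) := by
  have hF : ∀ s ∈ Set.uIcc 0 x, HasDerivAt
      (fun s => s * exp (-s) ^ 2 - 4 * (s + 1) * exp (-s)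
        + exp (-x) * (s + 4 * (s - 1) * exp s - s ^ 2))
      ((exp (-s) + exp (-(x - s))) * (exp (-s) + supersolution s)) s := by
    intro s _
    have e : HasDerivAt (fun s => exp (-s)) (exp (-s) * -1) s := (hasDerivAt_neg s).exp
    have hF' := (((hasDerivAt_id s).mul (e.pow 2)).sub
      ((((hasDerivAt_id s).add_const 1).const_mul 4).mul e)).add
      ((((hasDerivAt_id s).add
        ((((hasDerivAt_id s).sub_const 1).const_mul 4).mul (hasDerivAt_exp s))).sub
          (hasDerivAt_pow 2 s)).const_mul (exp (-x)))
    refine hF'.congr_deriv ?_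
    have hinv : exp (-s) * exp s = 1 := by rw [← exp_add]; simp
    rw [show -(x - s) = -x + s by ring, exp_add, supersolution]
    simp only [id_eq, Pi.pow_apply]
    linear_combination exp (-x) * (2 * s - 1) * hinv
  unfold T
  rw [intervalIntegral.integral_eq_sub_of_hasDerivAt hF
    ((by unfold supersolution; fun_prop : Continuous _).intervalIntegrable 0 x)]
  have hinv : exp (-x) * exp x = 1 := by rw [← exp_add]; simp
  simp only [supersolution, neg_zero, exp_zero]
  linear_combination 4 * (x - 1) * hinv

lemma T_exp_neg_add_supersolution_le {x : ℝ} (hx : 0 ≤ x) :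
    T (fun y => exp (-y) + supersolution y) x ≤ supersolution x := by
  rw [T_exp_neg_add_supersolution]
  have : exp (-x) ≤ 1 := exp_le_one_iff.2 (by linarith)
  have : 0 ≤ x * exp (-x) * (1 + x - exp (-x)) :=
    mul_nonneg (mul_nonneg hx (exp_pos _).le) (by linarith)
  linarith

lemma sum_range_succ_iterate_T {g : ℝ → ℝ} (hg : ∀ a b, IntervalIntegrable g volume a b)
    (n : ℕ) (x : ℝ) :
    ∑ k ∈ Finset.range (n + 1), T^[k + 1] g x
      = T (fun y => g y + ∑ k ∈ Finset.range n, T^[k + 1] g y) x := by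
  simp only [Function.iterate_succ_apply']
  rw [← T_sum _ fun k _ => intervalIntegrable_iterate_T hg k]
  congr 1
  funext y
  rw [Finset.sum_range_succ', add_comm]
  simp only [Function.iterate_succ_apply', Function.iterate_zero_apply]

lemma sum_range_iterate_T_le {g : ℝ → ℝ} (hg : ∀ a b, IntervalIntegrable g volume a b)
    {C : ℝ} (hC : 0 ≤ C) (hg_le : ∀ y, 0 ≤ y → g y ≤ C * exp (-y))
    (n : ℕ) {x : ℝ} (hx : 0 ≤ x) :
    ∑ k ∈ Finset.range n, T^[k + 1] g x ≤ C * supersolution x := by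
  induction n generalizing x with
  | zero => simpa using mul_nonneg hC (supersolution_nonneg hx)
  | succ n ih =>
    have hsum_int : ∀ a b, IntervalIntegrable
        (fun y => g y + ∑ k ∈ Finset.range n, T^[k + 1] g y) volume a b := fun a b => by
      simpa only [Finset.sum_apply] using (hg a b).add
        (IntervalIntegrable.sum _ fun k _ => intervalIntegrable_iterate_T hg (k + 1) a b)
    calc ∑ k ∈ Finset.range (n + 1), T^[k + 1] g x
        = T (fun y => g y + ∑ k ∈ Finset.range n, T^[k + 1] g y) x :=
          sum_range_succ_iterate_T hg n x
      _ ≤ T (fun y => C * (exp (-y) + supersolution y)) x :=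
          T_mono hx hsum_int
            (fun a b => (by unfold supersolution; fun_prop : Continuous _).intervalIntegrable a b)
            fun y hy => by rw [mul_add]; exact add_le_add (hg_le y hy.1) (ih hy.1)
      _ = C * T (fun y => exp (-y) + supersolution y) x := T_const_mul C x
      _ ≤ C * supersolution x := mul_le_mul_of_nonneg_left (T_exp_neg_add_supersolution_le hx) hC

theorem stmt_5 (C : ℝ) (hC : 0 ≤ C) (f : ℝ → ℝ) (hf_meas : Measurable f)
    (hf : ∀ x : ℝ, 0 ≤ f x ∧ f x ≤ C) (L : ℝ) (hL : 0 ≤ L) :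
    Summable (fun k : ℕ => T^[k + 1] (fun x => Real.exp (-x) * f x) L) ∧
    (∑' k : ℕ, T^[k + 1] (fun x => Real.exp (-x) * f x) L) ≤ 2 * Real.exp 1 * C * L := by
  have hf_int : ∀ a b, IntervalIntegrable f volume a b := fun a b =>
    (intervalIntegrable_const (c := C)).mono_fun' hf_meas.aestronglyMeasurable
      (ae_of_all _ fun x => (norm_of_nonneg (hf x).1).trans_le (hf x).2)
  have hg_int : ∀ a b, IntervalIntegrable (fun x => exp (-x) * f x) volume a b :=
    fun a b => (hf_int a b).continuousOn_mul (by fun_prop)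
  have hterm_nonneg (k : ℕ) : 0 ≤ T^[k + 1] (fun x => exp (-x) * f x) L :=
    iterate_T_nonneg (fun y _ => mul_nonneg (exp_pos _).le (hf y).1) (k + 1) L hL
  have hpartial (n : ℕ) :
      ∑ k ∈ Finset.range n, T^[k + 1] (fun x => exp (-x) * f x) L ≤ 2 * exp 1 * C * L :=
    calc _ ≤ C * supersolution L :=
          sum_range_iterate_T_le hg_int hC
            (fun y _ => by rw [mul_comm C]; exact mul_le_mul_of_nonneg_left (hf y).2 (exp_pos _).le)
            n hL
      _ ≤ C * (4 * L) := mul_le_mul_of_nonneg_left (supersolution_le hL) hC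
      _ ≤ 2 * exp 1 * C * L := by nlinarith [add_one_le_exp 1, mul_nonneg hC hL]
  exact ⟨summable_of_sum_range_le hterm_nonneg hpartial,
    Real.tsum_le_of_sum_range_le hterm_nonneg hpartial⟩
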